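/- arXiv:2309.13698 — 4 statements merged into one kernel-verified Lean document; each statement's English description precedes it below -/
import Mathlib

section
/- For any two binary words v and w, the 2×2 integer matrix T_v defined by T_v = [[2^|v| - (v)_2, (v)_2], [2^|v| - (v)_2 - 1, (v)_2 + 1]] satisfies T_v * T_w = T_{wv}, where wv denotes the concatenation of w and v, |v| is the length of v, and (v)_2 is the integer value of v interpreted as a binary number. -/
/-- The binary value of a word read most-significant-bit first. -/
def binVal (l : List Bool) : ℕ := l.foldl (fun n b => 2 * n + (if b then 1 else 0)) 0

/-- The matrix `T_v` associated to a binary word `v`. -/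
def Tword (v : List Bool) : Matrix (Fin 2) (Fin 2) ℤ :=
  !![(2 : ℤ) ^ v.length - binVal v, (binVal v : ℤ);
     (2 : ℤ) ^ v.length - binVal v - 1, (binVal v : ℤ) + 1]

lemma foldl_binStep_eq (l : List Bool) (n : ℕ) :
    l.foldl (fun n b => 2 * n + (if b then 1 else 0)) n = 2 ^ l.length * n + binVal l := by
  induction l generalizing n with
  | nil => simp [binVal]
  | cons b t ih =>
    have hcons : binVal (b :: t) = 2 ^ t.length * (2 * 0 + if b then 1 else 0) + binVal t :=
      ih _
    rw [List.foldl_cons, ih, hcons, List.length_cons]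
    ring

lemma binVal_append (w v : List Bool) :
    binVal (w ++ v) = 2 ^ v.length * binVal w + binVal v := by
  rw [binVal, List.foldl_append, foldl_binStep_eq, ← binVal]

theorem Tword_mul (v w : List Bool) : Tword v * Tword w = Tword (w ++ v) := by
  simp only [Tword, Matrix.mul_fin_two, binVal_append, List.length_append]
  push_cast
  congr 1
  ring_nf
end

section
/- For every natural number n ≥ 2, the n-th prime p_n satisfies p_n ≤ n². -/
/-!
Every binomial coefficient `choose N k` divides `lcm(1, …, N)`, and each prime `p ≤ N` enters this
lcm with a power `p ^ log_p N ≤ N`; summing over `k` gives `2 ^ N ≤ (N + 1) * N ^ π(N)`.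
If `π(n²) < n`, then with `N = n²` the right-hand side is at most `(n² + 1) * (n²) ^ (n - 1)`,
which is smaller than `2 ^ (n²) = (2 ^ n) ^ n` as soon as `n² < 2 ^ n`, i.e. for `n ≥ 5`.
The cases `n = 2, 3, 4` are checked directly.
-/

open Chebyshev
open scoped Nat.Prime

theorem Nat.lcmUpto_le_pow_primeCounting (N : ℕ) : lcmUpto N ≤ N ^ π N := by
  rcases eq_or_ne N 0 with rfl | hN
  · simp [lcmUpto]
  rw [lcmUpto_eq_prod_pow_log, ← primesLE_card_eq_primeCounting, ← Finset.prod_const]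
  exact Finset.prod_le_prod' fun p _ ↦ pow_log_le_self p hN

theorem Nat.two_pow_le_succ_mul_pow_primeCounting (N : ℕ) : 2 ^ N ≤ (N + 1) * N ^ π N :=
  (two_pow_le_mul_lcmUpto N).trans (Nat.mul_le_mul_left _ (lcmUpto_le_pow_primeCounting N))

theorem Nat.sq_lt_two_pow {n : ℕ} (hn : 5 ≤ n) : n ^ 2 < 2 ^ n := by
  induction n, hn using Nat.le_induction with
  | base => norm_num
  | succ n hn ih =>
    calc (n + 1) ^ 2 < 2 * n ^ 2 := by nlinarith
      _ < 2 * 2 ^ n := by omega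
      _ = 2 ^ (n + 1) := by ring

theorem Nat.le_primeCounting_sq {n : ℕ} (hn : 2 ≤ n) : n ≤ π (n ^ 2) := by
  rcases lt_or_ge n 5 with hsmall | hn5
  · interval_cases n <;> decide
  by_contra! hπ
  have hsq := sq_lt_two_pow hn5
  have hbound : (n ^ 2 + 1) * (n ^ 2) ^ π (n ^ 2) < 2 ^ n * (2 ^ n) ^ (n - 1) :=
    calc (n ^ 2 + 1) * (n ^ 2) ^ π (n ^ 2)
        ≤ (n ^ 2 + 1) * (n ^ 2) ^ (n - 1) :=
          Nat.mul_le_mul_left _ (Nat.pow_le_pow_right (by positivity) (Nat.le_sub_one_of_lt hπ))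
      _ < 2 ^ n * (2 ^ n) ^ (n - 1) :=
          Nat.mul_lt_mul_of_le_of_lt hsq (Nat.pow_lt_pow_left hsq (by omega)) (by positivity)
  have hpow : 2 ^ n * (2 ^ n) ^ (n - 1) = 2 ^ (n ^ 2) := by
    rw [← _root_.pow_succ', ← pow_mul, Nat.sub_one_add_one (by omega), sq]
  exact (hbound.trans_eq hpow).not_ge (two_pow_le_succ_mul_pow_primeCounting _)

theorem nth_prime_le_sq (n : ℕ) (hn : 2 ≤ n) : Nat.nth Nat.Prime (n - 1) ≤ n ^ 2 := by
  have hcount : n - 1 < Nat.count Nat.Prime (n ^ 2 + 1) :=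
    Nat.sub_one_lt_of_le (by omega) (Nat.le_primeCounting_sq hn)
  exact Nat.lt_succ_iff.mp (Nat.nth_lt_of_lt_count hcount)
end

section
/- Let U be a finite set of size m, let x = k + 2, and for C ⊆ U (identifying U with {u_1,...,u_m}) define a_C = −(x^{m+1} + Σ_{j : u_j ∈ C} x^j), and y = k·x^{m+1} + Σ_{j=0}^{m} x^j. If C_1, ..., C_k partition U (they are pairwise disjoint and their union is U), then y + a_{C_1} + ⋯ + a_{C_k} = 1. -/
/-!
Summing the `a (C i)` over the partition collects each power `x ^ (j + 1)`, `j < m`, exactly once,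
together with `k` copies of `x ^ (m + 1)`; these cancel everything in `y` except its constant
term `x ^ 0 = 1`. The value of `x` plays no role.
-/

open Finset

theorem Finset.sum_sum_eq_sum_of_partition {ι α M : Type*} [Fintype ι] [Fintype α] [DecidableEq α]
    [AddCommMonoid M] (C : ι → Finset α) (hdisj : ∀ i j, i ≠ j → Disjoint (C i) (C j))
    (hcover : (univ : Finset α) = univ.biUnion C) (f : α → M) :
    ∑ i, ∑ j ∈ C i, f j = ∑ j, f j := by
  rw [hcover, sum_biUnion fun i _ j _ hij => hdisj i j hij]

theorem Finset.sum_range_succ_pow_eq_one_add_sum_fin {R : Type*} [CommSemiring R] (x : R) (m : ℕ) :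
    ∑ j ∈ range (m + 1), x ^ j = 1 + ∑ j : Fin m, x ^ ((j : ℕ) + 1) := by
  rw [sum_range_succ', Fin.sum_univ_eq_sum_range (fun j => x ^ (j + 1)), pow_zero, add_comm]

theorem ksum_of_exact_cover (m k : ℕ) (C : Fin k → Finset (Fin m))
    (hdisj : ∀ i j, i ≠ j → Disjoint (C i) (C j))
    (hcover : (Finset.univ : Finset (Fin m)) = Finset.univ.biUnion C) :
    letI x : ℤ := (k : ℤ) + 2
    letI a : Finset (Fin m) → ℤ := fun S => -(x ^ (m + 1) + ∑ j ∈ S, x ^ ((j : ℕ) + 1))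
    letI y : ℤ := k * x ^ (m + 1) + ∑ j ∈ Finset.range (m + 1), x ^ j
    y + ∑ i : Fin k, a (C i) = 1 := by
  set x : ℤ := (k : ℤ) + 2
  have hcollect : ∑ i, -(x ^ (m + 1) + ∑ j ∈ C i, x ^ ((j : ℕ) + 1))
      = -(k * x ^ (m + 1) + ∑ j : Fin m, x ^ ((j : ℕ) + 1)) := by
    simp only [sum_neg_distrib, sum_add_distrib, sum_const, card_univ, Fintype.card_fin,
      nsmul_eq_mul, sum_sum_eq_sum_of_partition C hdisj hcover]
  simp only [hcollect, sum_range_succ_pow_eq_one_add_sum_fin]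
  ring
end

section
/- In the VEST-to-VEST-without-S reduction, define v' by appending entries k and 1 to v, define T'_i by extending T_i with the 2×2 block [[1,−1],[0,1]] acting on the new coordinates (and zeros elsewhere off the diagonal blocks), and define S' by extending S with the 2×2 block [[10,0],[0,0]]. If S T_{i_k} ⋯ T_{i_1} v = 0, then S' T'_{i_k} ⋯ T'_{i_1} v' = 0. -/
/-!
Block-diagonal matrices multiply blockwise, so the product of the `T'` is block diagonal with
blocks `T_{i_k} ⋯ T_{i_1}` and `!![1, -1; 0, 1] ^ k = !![1, -k; 0, 1]`. The second block sends the
counter `![k, 1]` to `![0, 1]`, which the block `!![10, 0; 0, 0]` of `S'` kills, while the first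
block reproduces the original zero.
-/

namespace Matrix

variable {α n o : Type*} [Semiring α] [Fintype n] [Fintype o] [DecidableEq n] [DecidableEq o]

theorem list_prod_ofFn_fromBlocks {k : ℕ} (A : Fin k → Matrix n n α) (D : Fin k → Matrix o o α) :
    (List.ofFn fun j => fromBlocks (A j) 0 0 (D j)).prod =
      fromBlocks (List.ofFn A).prod 0 0 (List.ofFn D).prod := by
  induction k with
  | zero => simp [fromBlocks_one]
  | succ k ih =>
    simp only [List.ofFn_succ, List.prod_cons, ih, fromBlocks_multiply]
    simp

theorem fin_two_upper_unitriangular_pow (a : α) (k : ℕ) :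
    !![1, a; 0, 1] ^ k = !![1, k • a; 0, 1] := by
  induction k with
  | zero => simp [one_fin_two]
  | succ k ih =>
    rw [pow_succ, ih, mul_fin_two]
    simp [add_one_mul, add_comm]

end Matrix

theorem vest_to_vest_without_S (d h m k : ℕ)
    (S : Matrix (Fin h) (Fin d) ℚ) (T : Fin m → Matrix (Fin d) (Fin d) ℚ)
    (v : Fin d → ℚ) (ι : Fin k → Fin m)
    (hsol : S.mulVec (((List.ofFn fun j => T (ι j)).prod).mulVec v) = 0) :
    letI S' : Matrix (Fin h ⊕ Fin 2) (Fin d ⊕ Fin 2) ℚ :=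
      Matrix.fromBlocks S 0 0 !![10, 0; 0, 0]
    letI T' : Fin m → Matrix (Fin d ⊕ Fin 2) (Fin d ⊕ Fin 2) ℚ :=
      fun i => Matrix.fromBlocks (T i) 0 0 !![1, -1; 0, 1]
    letI v' : (Fin d ⊕ Fin 2) → ℚ := Sum.elim v ![(k : ℚ), 1]
    S'.mulVec (((List.ofFn fun j => T' (ι j)).prod).mulVec v') = 0 := by
  have hcounter :
      (List.ofFn fun _ : Fin k => !![(1 : ℚ), -1; 0, 1]).prod.mulVec ![(k : ℚ), 1] = ![0, 1] := by
    rw [List.ofFn_const, List.prod_replicate, Matrix.fin_two_upper_unitriangular_pow]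
    ext i; fin_cases i <;> simp
  simp only [Matrix.list_prod_ofFn_fromBlocks, Matrix.fromBlocks_mulVec, Sum.elim_comp_inl,
    Sum.elim_comp_inr, Matrix.zero_mulVec, add_zero, zero_add, hcounter, hsol]
  ext (i | i)
  · simp
  · fin_cases i <;> simp
end
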